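/- Let A be an expanding integer n×n matrix and K ⊂ ℤⁿ finite. Two elements ξ = (…x₂x₁, v) and ζ = (…y₂y₁, u) with x_i, y_i ∈ K and u, v ∈ ℤⁿ satisfy Φ(ξ) = Φ(ζ) if and only if there exists a finite set B ⊂ ℤⁿ and a sequence (v_m)_{m≥1} in B with v_m + x_m + A x_{m-1} + … + A^{m-1} x₁ + A^m v = y_m + A y_{m-1} + … + A^{m-1} y₁ + A^m u for every m ≥ 1. -/

import Mathlib

/-!
Let `M` be `A` over `ℝ` and `H_m(x, v) = A^m v + x_m + A x_{m-1} + … + A^{m-1} x₁` (Horner's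
scheme). Shifting the expansion by `m` digits gives `M^m Φ(…x₂x₁, v) = H_m(x, v) + Φ(…x_{m+1}, 0)`.
Since `A` is expanding, Gelfand's formula makes `∑ ‖M⁻ᵏ‖` finite, so these tails are bounded
uniformly in `m`, and `H_m(y, u) - H_m(x, v) = M^m (Φ(ζ) - Φ(ξ)) + O(1)`. If `Φ(ξ) = Φ(ζ)`,
the integer vectors `H_m(y, u) - H_m(x, v)` are therefore bounded, hence lie in a finite set.
Conversely, if they are bounded then so is `M^m Δ` for `Δ = Φ(ζ) - Φ(ξ)`, and
`‖Δ‖ ≤ ‖M⁻ᵐ‖ ‖M^m Δ‖ → 0`.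
-/

def IsExpanding {n : ℕ} (A : Matrix (Fin n) (Fin n) ℤ) : Prop :=
  ∀ μ : ℂ, (A.map (Int.cast : ℤ → ℂ)).charpoly.IsRoot μ → 1 < ‖μ‖

open Matrix Filter Topology Finset

attribute [local instance] Matrix.linftyOpNormedRing Matrix.linftyOpNormedAlgebra

theorem summable_norm_pow_of_spectralRadius_lt_one {A : Type*} [NormedRing A] [NormedAlgebra ℂ A]
    [CompleteSpace A] {a : A} (ha : spectralRadius ℂ a < 1) : Summable fun k => ‖a ^ k‖ := by
  obtain ⟨r, hρr, hr1⟩ := ENNReal.lt_iff_exists_nnreal_btwn.mp ha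
  refine .of_norm_bounded_eventually_nat
    (summable_geometric_of_lt_one r.2 (by exact_mod_cast hr1)) ?_
  filter_upwards
    [(spectrum.pow_norm_pow_one_div_tendsto_nhds_spectralRadius a).eventually_lt_const hρr,
      eventually_ge_atTop 1] with k hk hk1
  have hk0 : (0 : ℝ) < k := by exact_mod_cast hk1
  rw [ENNReal.ofReal_lt_coe_iff (by positivity), one_div] at hk
  have hpow := (Real.rpow_inv_lt_iff_of_pos (norm_nonneg _) r.2 hk0).1 hk
  rw [Real.rpow_natCast] at hpow
  simpa using hpow.le

theorem Matrix.linfty_opNorm_map_ofReal {ι : Type*} [Fintype ι] [DecidableEq ι]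
    (P : Matrix ι ι ℝ) :
    ‖P.map Complex.ofRealHom‖ = ‖P‖ := by
  simp [linfty_opNorm_def, Complex.nnnorm_real]

theorem IsExpanding.det_ne_zero {n : ℕ} {A : Matrix (Fin n) (Fin n) ℤ} (hA : IsExpanding A) :
    A.det ≠ 0 := by
  intro h
  have hdet : (A.map (Int.cast : ℤ → ℂ)).det = 0 := by
    rw [show A.map (Int.cast : ℤ → ℂ) = (Int.castRingHom ℂ).mapMatrix A from rfl,
      ← RingHom.map_det, h, map_zero]
  have hroot : (A.map (Int.cast : ℤ → ℂ)).charpoly.IsRoot 0 := by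
    rw [← Matrix.mem_spectrum_iff_isRoot_charpoly, spectrum.zero_mem_iff, isUnit_iff_isUnit_det,
      hdet]
    exact not_isUnit_zero
  exact absurd (hA 0 hroot) (by simp)

theorem IsExpanding.isUnit_det_map {n : ℕ} {A : Matrix (Fin n) (Fin n) ℤ} (hA : IsExpanding A) :
    IsUnit (A.map (Int.cast : ℤ → ℝ)).det := by
  rw [show A.map (Int.cast : ℤ → ℝ) = (Int.castRingHom ℝ).mapMatrix A from rfl,
    ← RingHom.map_det, isUnit_iff_ne_zero, eq_intCast]
  exact_mod_cast hA.det_ne_zero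

theorem IsExpanding.spectralRadius_inv_lt_one {n : ℕ} {A : Matrix (Fin n) (Fin n) ℤ}
    (hA : IsExpanding A) :
    spectralRadius ℂ ((A.map (Int.cast : ℤ → ℝ))⁻¹.map Complex.ofRealHom) < 1 := by
  set M := A.map (Int.cast : ℤ → ℝ)
  have hMc : M.map Complex.ofRealHom = A.map (Int.cast : ℤ → ℂ) := by
    ext i j; simp [M]
  let U : (Matrix (Fin n) (Fin n) ℂ)ˣ :=
    { val := M.map Complex.ofRealHom
      inv := M⁻¹.map Complex.ofRealHom
      val_inv := by rw [← Matrix.map_mul, mul_nonsing_inv _ hA.isUnit_det_map]; simp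
      inv_val := by rw [← Matrix.map_mul, nonsing_inv_mul _ hA.isUnit_det_map]; simp }
  change spectralRadius ℂ (↑U⁻¹ : Matrix (Fin n) (Fin n) ℂ) < 1
  have hlt : ∀ ν ∈ spectrum ℂ (↑U⁻¹ : Matrix (Fin n) (Fin n) ℂ), ‖ν‖₊ < 1 := by
    intro ν hν
    rw [← spectrum.map_inv, Set.mem_inv] at hν
    have hroot : (A.map (Int.cast : ℤ → ℂ)).charpoly.IsRoot ν⁻¹ := by
      rw [← hMc, ← Matrix.mem_spectrum_iff_isRoot_charpoly]
      exact hν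
    have hν' := hA _ hroot
    rw [norm_inv, one_lt_inv_iff₀] at hν'
    exact_mod_cast hν'.2
  rcases (spectrum ℂ (↑U⁻¹ : Matrix (Fin n) (Fin n) ℂ)).eq_empty_or_nonempty with h | h
  · rw [spectralRadius, h]; simp
  · simpa using spectrum.spectralRadius_lt_of_forall_lt_of_nonempty h hlt

theorem IsExpanding.summable_norm_inv_pow {n : ℕ} {A : Matrix (Fin n) (Fin n) ℤ}
    (hA : IsExpanding A) :
    Summable fun k => ‖(A.map (Int.cast : ℤ → ℝ))⁻¹ ^ k‖ := by
  simpa only [← Matrix.map_pow, linfty_opNorm_map_ofReal] using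
    summable_norm_pow_of_spectralRadius_lt_one hA.spectralRadius_inv_lt_one

section Horner

variable {ι R : Type*} [Fintype ι] [Semiring R]

def hornerMulVec (A : Matrix ι ι R) (v : ι → R) (x : ℕ → ι → R) : ℕ → ι → R
  | 0 => v
  | m + 1 => A *ᵥ hornerMulVec A v x m + x m

theorem hornerMulVec_eq [DecidableEq ι] (A : Matrix ι ι R) (v : ι → R) (x : ℕ → ι → R)
    (m : ℕ) :
    hornerMulVec A v x m = ∑ i ∈ range m, (A ^ i) *ᵥ x (m - 1 - i) + (A ^ m) *ᵥ v := by
  induction m with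
  | zero => simp [hornerMulVec]
  | succ m ih =>
    rw [hornerMulVec, ih, sum_range_succ', mulVec_add, mulVec_sum]
    simp only [pow_succ', ← mulVec_mulVec, pow_zero, one_mulVec, Nat.add_sub_cancel, Nat.sub_zero]
    rw [add_right_comm]
    congr 2
    exact sum_congr rfl fun i _ => by rw [Nat.sub_sub, Nat.add_comm]

theorem hornerMulVec_map {S : Type*} [Semiring S] (f : R →+* S) (A : Matrix ι ι R) (v : ι → R)
    (x : ℕ → ι → R) (m : ℕ) :
    (fun i => f (hornerMulVec A v x m i)) =
      hornerMulVec (A.map f) (fun i => f (v i)) (fun k i => f (x k i)) m := by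
  induction m with
  | zero => rfl
  | succ m ih =>
    funext i
    simp only [hornerMulVec, Pi.add_apply, map_add, RingHom.map_mulVec, ← ih]
    rfl

end Horner

theorem Matrix.mulVec_tsum {ι β : Type*} [Fintype ι] (M : Matrix ι ι ℝ) {f : β → ι → ℝ}
    (hf : Summable f) :
    M *ᵥ ∑' k, f k = ∑' k, M *ᵥ f k := by
  simpa using (mulVecLin M).toContinuousLinearMap.map_tsum hf

section RadixValue

variable {ι : Type*} [Fintype ι] [DecidableEq ι] {M : Matrix ι ι ℝ}

/-- `Φ(…x₂x₁, 0)`, with `x k` standing for the digit `x_{k+1}`. -/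
noncomputable def radixValue (M : Matrix ι ι ℝ) (x : ℕ → ι → ℝ) : ι → ℝ :=
  ∑' k, (M⁻¹ ^ (k + 1)) *ᵥ x k

theorem eq_zero_of_eventually_norm_pow_mulVec_le (hM : IsUnit M.det)
    (hM' : Tendsto (fun k => ‖M⁻¹ ^ k‖) atTop (𝓝 0)) {z : ι → ℝ} {b : ℝ}
    (h : ∀ᶠ m in atTop, ‖M ^ m *ᵥ z‖ ≤ b) : z = 0 := by
  have hinv (m : ℕ) : M⁻¹ ^ m * M ^ m = 1 := by
    rw [inv_pow', nonsing_inv_mul _ (by rw [det_pow]; exact hM.pow m)]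
  refine norm_le_zero_iff.1 (ge_of_tendsto (by simpa only [zero_mul] using hM'.mul_const b) ?_)
  filter_upwards [h] with m hm
  calc ‖z‖ = ‖M⁻¹ ^ m *ᵥ (M ^ m *ᵥ z)‖ := by rw [mulVec_mulVec, hinv, one_mulVec]
    _ ≤ ‖M⁻¹ ^ m‖ * ‖M ^ m *ᵥ z‖ := linfty_opNorm_mulVec _ _
    _ ≤ ‖M⁻¹ ^ m‖ * b := mul_le_mul_of_nonneg_left hm (norm_nonneg _)

variable (hsum : Summable fun k => ‖M⁻¹ ^ k‖) {x : ℕ → ι → ℝ} {c : ℝ} (hx : ∀ k, ‖x k‖ ≤ c)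

include hx in
theorem norm_radixValue_term_le (k : ℕ) : ‖(M⁻¹ ^ (k + 1)) *ᵥ x k‖ ≤ ‖M⁻¹ ^ (k + 1)‖ * c :=
  (linfty_opNorm_mulVec _ _).trans (mul_le_mul_of_nonneg_left (hx k) (norm_nonneg _))

include hsum hx

theorem summable_radixValue_terms : Summable fun k => (M⁻¹ ^ (k + 1)) *ᵥ x k :=
  .of_norm_bounded (((summable_nat_add_iff 1).2 hsum).mul_right c) (norm_radixValue_term_le hx)

theorem norm_radixValue_le : ‖radixValue M x‖ ≤ (∑' k, ‖M⁻¹ ^ (k + 1)‖) * c :=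
  tsum_of_norm_bounded (((summable_nat_add_iff 1).2 hsum).hasSum.mul_right c)
    (norm_radixValue_term_le hx)

theorem mulVec_radixValue (hM : IsUnit M.det) :
    M *ᵥ radixValue M x = x 0 + radixValue M (fun k => x (k + 1)) := by
  have hs := summable_radixValue_terms hsum hx
  rw [radixValue, hs.tsum_eq_zero_add, mulVec_add, mulVec_tsum M ((summable_nat_add_iff 1).2 hs)]
  have hcancel (k : ℕ) : M * M⁻¹ ^ (k + 1) = M⁻¹ ^ k := by
    rw [pow_succ', ← mul_assoc, mul_nonsing_inv M hM, one_mul]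
  simp only [mulVec_mulVec, hcancel, pow_zero, one_mulVec, zero_add]
  rfl

theorem pow_mulVec_add_radixValue (hM : IsUnit M.det) (v : ι → ℝ) (m : ℕ) :
    M ^ m *ᵥ (v + radixValue M x) = hornerMulVec M v x m + radixValue M (fun k => x (k + m)) := by
  induction m with
  | zero => simp [hornerMulVec]
  | succ m ih =>
    rw [pow_succ', ← mulVec_mulVec, ih, mulVec_add,
      mulVec_radixValue hsum (fun k => hx (k + m)) hM, hornerMulVec, add_assoc]
    simp only [zero_add, add_right_comm _ 1 m, add_assoc]

variable {y : ℕ → ι → ℝ} (hy : ∀ k, ‖y k‖ ≤ c) {v u : ι → ℝ}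
include hy

theorem norm_hornerMulVec_sub_le_of_eq (hM : IsUnit M.det)
    (h : v + radixValue M x = u + radixValue M y) (m : ℕ) :
    ‖hornerMulVec M u y m - hornerMulVec M v x m‖ ≤ 2 * ((∑' k, ‖M⁻¹ ^ (k + 1)‖) * c) := by
  have hm := congrArg (M ^ m *ᵥ ·) h
  simp only [pow_mulVec_add_radixValue hsum hx hM, pow_mulVec_add_radixValue hsum hy hM] at hm
  have hdiff : hornerMulVec M u y m - hornerMulVec M v x m =
      radixValue M (fun k => x (k + m)) - radixValue M (fun k => y (k + m)) := by
    rw [sub_eq_sub_iff_add_eq_add, add_comm (radixValue M _)]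
    exact hm.symm
  rw [hdiff, two_mul]
  exact (norm_sub_le _ _).trans (add_le_add (norm_radixValue_le hsum fun k => hx (k + m))
    (norm_radixValue_le hsum fun k => hy (k + m)))

theorem eq_of_eventually_norm_hornerMulVec_sub_le (hM : IsUnit M.det) {b : ℝ}
    (h : ∀ᶠ m in atTop, ‖hornerMulVec M u y m - hornerMulVec M v x m‖ ≤ b) :
    v + radixValue M x = u + radixValue M y := by
  have hpow (m : ℕ) : M ^ m *ᵥ ((u + radixValue M y) - (v + radixValue M x)) =
      (hornerMulVec M u y m - hornerMulVec M v x m) +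
        (radixValue M (fun k => y (k + m)) - radixValue M (fun k => x (k + m))) := by
    rw [mulVec_sub, pow_mulVec_add_radixValue hsum hx hM, pow_mulVec_add_radixValue hsum hy hM]
    abel
  refine (sub_eq_zero.1 (eq_zero_of_eventually_norm_pow_mulVec_le hM hsum.tendsto_atTop_zero
    (b := b + 2 * ((∑' k, ‖M⁻¹ ^ (k + 1)‖) * c)) ?_)).symm
  filter_upwards [h] with m hm
  rw [hpow, two_mul]
  exact (norm_add_le _ _).trans (add_le_add hm ((norm_sub_le _ _).trans
    (add_le_add (norm_radixValue_le hsum fun k => hy (k + m))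
      (norm_radixValue_le hsum fun k => hx (k + m)))))

end RadixValue

theorem norm_intCast_comp {ι : Type*} [Fintype ι] (z : ι → ℤ) :
    ‖fun i => (z i : ℝ)‖ = ‖z‖ := by
  simp only [Pi.norm_def]
  congr 2

theorem norm_hornerMulVec_intCast_sub {ι : Type*} [Fintype ι] (A : Matrix ι ι ℤ)
    (v u : ι → ℤ) (x y : ℕ → ι → ℤ) (m : ℕ) :
    ‖hornerMulVec (A.map (Int.cast : ℤ → ℝ)) (fun i => (u i : ℝ)) (fun k i => (y k i : ℝ)) m -
        hornerMulVec (A.map (Int.cast : ℤ → ℝ)) (fun i => (v i : ℝ)) (fun k i => (x k i : ℝ)) m‖ =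
      ‖hornerMulVec A u y m - hornerMulVec A v x m‖ := by
  have hcast (w : ι → ℤ) (z : ℕ → ι → ℤ) :
      hornerMulVec (A.map (Int.cast : ℤ → ℝ)) (fun i => (w i : ℝ)) (fun k i => (z k i : ℝ)) m =
        fun i => ((hornerMulVec A w z m i : ℤ) : ℝ) :=
    (hornerMulVec_map (Int.castRingHom ℝ) A w z m).symm
  rw [hcast, hcast, ← norm_intCast_comp]
  congr 1
  funext i
  simp

/-- `Φ(…x₂x₁, v) = Φ(…y₂y₁, u)` iff there is a finite set `B` and a
sequence `(v_m)` in `B` with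
`v_m + x_m + A x_{m-1} + … + A^{m-1} x₁ + A^m v = y_m + A y_{m-1} + … + A^{m-1} y₁ + A^m u`
for every `m ≥ 1`.  (Sequences are indexed so that `x k` is `x_{k+1}`.) -/
theorem stmt5 {n : ℕ} (A : Matrix (Fin n) (Fin n) ℤ) (hA : IsExpanding A)
    (K : Finset (Fin n → ℤ)) (x y : ℕ → (Fin n → ℤ))
    (hx : ∀ k, x k ∈ K) (hy : ∀ k, y k ∈ K) (v u : Fin n → ℤ) :
    ((fun i => (v i : ℝ)) + ∑' k, ((A.map (Int.cast : ℤ → ℝ))⁻¹ ^ (k + 1)).mulVec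
        (fun i => (x k i : ℝ)) =
      (fun i => (u i : ℝ)) + ∑' k, ((A.map (Int.cast : ℤ → ℝ))⁻¹ ^ (k + 1)).mulVec
        (fun i => (y k i : ℝ))) ↔
    ∃ (B : Finset (Fin n → ℤ)) (w : ℕ → (Fin n → ℤ)), (∀ m, w m ∈ B) ∧
      ∀ m : ℕ, 1 ≤ m →
        w m + (∑ i ∈ Finset.range m, (A ^ i).mulVec (x (m - 1 - i))) + (A ^ m).mulVec v =
          (∑ i ∈ Finset.range m, (A ^ i).mulVec (y (m - 1 - i))) + (A ^ m).mulVec u := by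
  have hM := hA.isUnit_det_map
  have hsum := hA.summable_norm_inv_pow
  obtain ⟨c, hc⟩ := K.finite_toSet.isBounded.exists_norm_le
  have hxc (k : ℕ) : ‖fun i => (x k i : ℝ)‖ ≤ c := (norm_intCast_comp _).trans_le (hc _ (hx k))
  have hyc (k : ℕ) : ‖fun i => (y k i : ℝ)‖ ≤ c := (norm_intCast_comp _).trans_le (hc _ (hy k))
  constructor
  · intro h
    have hfin := (isCompact_closedBall (0 : Fin n → ℤ)
      (2 * ((∑' k, ‖(A.map (Int.cast : ℤ → ℝ))⁻¹ ^ (k + 1)‖) * c))).finite_of_discrete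
    refine ⟨hfin.toFinset, fun m => hornerMulVec A u y m - hornerMulVec A v x m, fun m => ?_,
      fun m _ => by rw [add_assoc, ← hornerMulVec_eq, ← hornerMulVec_eq, sub_add_cancel]⟩
    rw [Set.Finite.mem_toFinset, mem_closedBall_zero_iff, ← norm_hornerMulVec_intCast_sub]
    exact norm_hornerMulVec_sub_le_of_eq hsum hxc hyc hM h m
  · rintro ⟨B, w, hwB, hw⟩
    obtain ⟨b, hb⟩ := B.finite_toSet.isBounded.exists_norm_le
    refine eq_of_eventually_norm_hornerMulVec_sub_le hsum hxc hyc hM (b := b) ?_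
    filter_upwards [eventually_ge_atTop 1] with m hm
    have hwm := hw m hm
    rw [add_assoc, ← hornerMulVec_eq, ← hornerMulVec_eq] at hwm
    rw [norm_hornerMulVec_intCast_sub, ← eq_sub_of_add_eq hwm]
    exact hb _ (hwB m)
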